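/- arXiv:1806.07363 — 4 statements merged into one kernel-verified Lean document; each statement's English description precedes it below -/
import Mathlib

section
/- Assume the parameter conditions and let t = N·E[H₁₁²·1_{|H₁₁| < N^{−ν}}] / P[|H₁₁| < N^{−ρ}]. Then there exist a small constant c = c(α, ν, ρ, C₁, C₂) > 0 and a large constant C = C(α, ν, ρ, C₁, C₂) > 0 such that for all sufficiently large N: c·N^{(α−2)ν} ≤ t ≤ C·N^{(α−2)ν}. -/
open MeasureTheory ProbabilityTheory Matrix Filter
open scoped ENNReal NNReal

noncomputable section

namespace Levy

/-- The normalization `σ` from equation (2.2) of the paper. -/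
def stdSigma (α : ℝ) : ℝ := (Real.pi / (2 * Real.sin (Real.pi * α / 2) * Real.Gamma α)) ^ (α⁻¹)

/-- `Z` is a `(0, σ)` `α`-stable law and `J` is a deformation satisfying the coupling
assumptions of Definition 2.1 of the paper, with tail constants `C₁, C₂`. -/
structure DeformedStable {Ω : Type} [MeasureSpace Ω]
    (α σ C₁ C₂ : ℝ) (Z J : Ω → ℝ) : Prop where
  measZ : Measurable Z
  measJ : Measurable J
  charZ : ∀ t : ℝ,
    (∫ ω, Complex.exp (Complex.I * ((t * Z ω : ℝ) : ℂ))) =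
      Complex.exp (((-(σ ^ α * |t| ^ α) : ℝ) : ℂ))
  symmJ : Measure.map J ℙ = Measure.map (fun ω => -J ω) ℙ
  symmZJ : Measure.map (fun ω => Z ω + J ω) ℙ = Measure.map (fun ω => -(Z ω + J ω)) ℙ
  sqJ : Integrable (fun ω => (J ω) ^ 2) ℙ
  tail_lower : ∀ t : ℝ, 0 ≤ t →
    ENNReal.ofReal (C₁ / (t + 1) ^ α) ≤ ℙ {ω | t ≤ |Z ω + J ω|}
  tail_upper : ∀ t : ℝ, 0 ≤ t →
    ℙ {ω | t ≤ |Z ω + J ω|} ≤ ENNReal.ofReal (C₂ / (t + 1) ^ α)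

/-- `H` is an `N × N` `α`-Lévy matrix built from the deformed stable law `𝔷 = Z + J`. -/
structure IsLevyMatrix {Ω : Type} [MeasureSpace Ω] (α : ℝ) (Z J : Ω → ℝ)
    (N : ℕ) (H : Fin N → Fin N → Ω → ℝ) : Prop where
  symm : ∀ i j, H i j = H j i
  meas : ∀ i j, Measurable (H i j)
  indep : iIndepFun
    (fun p : {p : Fin N × Fin N // p.1 ≤ p.2} => H p.1.1 p.1.2) ℙ
  law : ∀ i j, Measure.map (H i j) ℙ =
    Measure.map (fun ω => (N : ℝ) ^ (-α⁻¹) * (Z ω + J ω)) ℙ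

/-- The resolvent `(M - z)⁻¹` of a real matrix, viewed as a complex matrix. -/
def resolv {N : ℕ} (M : Matrix (Fin N) (Fin N) ℝ) (z : ℂ) : Matrix (Fin N) (Fin N) ℂ :=
  (M.map (fun x : ℝ => (x : ℂ)) - z • (1 : Matrix (Fin N) (Fin N) ℂ))⁻¹

/-- The Stieltjes transform `m_N(z) = N⁻¹ Tr (M - z)⁻¹`. -/
def stieltjes {N : ℕ} (M : Matrix (Fin N) (Fin N) ℝ) (z : ℂ) : ℂ :=
  (N : ℂ)⁻¹ * (resolv M z).trace

/-- The `b`-removed matrix `X`, coupled to `H` by `X_ij = H_ij · 1_{|H_ij| > N^(b - 1/α)}`. -/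
def removal {Ω : Type} (α b : ℝ) (N : ℕ) (H : Fin N → Fin N → Ω → ℝ) (ω : Ω) :
    Matrix (Fin N) (Fin N) ℝ :=
  Matrix.of fun i j => if (N : ℝ) ^ (b - α⁻¹) < |H i j ω| then H i j ω else 0

/-- Setting the `i`-th row and column of a matrix to zero. -/
def minorMat {N : ℕ} (M : Matrix (Fin N) (Fin N) ℝ) (i : Fin N) :
    Matrix (Fin N) (Fin N) ℝ :=
  Matrix.of fun j k => if j = i ∨ k = i then 0 else M j k

/-- The function `φ_{α,z}` from equation (2.3) of the paper. -/
def phiFn (α : ℝ) (z x : ℂ) : ℂ :=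
  ((Real.Gamma (α / 2) : ℝ) : ℂ)⁻¹ *
    ∫ t in Set.Ioi (0 : ℝ),
      ((t ^ (α / 2 - 1) : ℝ) : ℂ) * Complex.exp (Complex.I * (t : ℂ) * z) *
        Complex.exp (-(((Real.Gamma (1 - α / 2) : ℝ) : ℂ) * ((t ^ (α / 2) : ℝ) : ℂ) * x))

/-- The function `ψ_{α,z}` from equation (2.3) of the paper. -/
def psiFn (α : ℝ) (z x : ℂ) : ℂ :=
  ∫ t in Set.Ioi (0 : ℝ),
    Complex.exp (Complex.I * (t : ℂ) * z) *
      Complex.exp (-(((Real.Gamma (1 - α / 2) : ℝ) : ℂ) * ((t ^ (α / 2) : ℝ) : ℂ) * x))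

/-- `y` is the fixed-point function `z ↦ y(z)` with `Re y(z) > 0` and `y(z) = φ_{α,z}(y(z))`. -/
def IsStieltjesFP (α : ℝ) (y : ℂ → ℂ) : Prop :=
  ∀ z : ℂ, 0 < z.im → 0 < (y z).re ∧ y z = phiFn α z (y z)

/-- The Stieltjes transform `m_α(z) = i ψ_{α,z}(y(z))` of the limiting measure `μ_α`. -/
def mAlpha (α : ℝ) (y : ℂ → ℂ) (z : ℂ) : ℂ := Complex.I * psiFn α z (y z)

/-- The parameter conditions (3.1) of the paper. -/
structure ParamConds (α b ν ρ : ℝ) : Prop where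
  hα0 : 0 < α
  hα2 : α < 2
  hb : 0 < b
  hνdef : ν = α⁻¹ - b
  hν0 : 0 < ν
  hρ0 : 0 < ρ
  hρν : ρ < ν
  hνhalf : ν < 1 / 2
  hνlow : 1 / (4 - α) < ν
  hνhigh : ν < 1 / (4 - 2 * α)
  hαρ : α * ρ < (2 - α) * ν

/-- `W` is an `N × N` GOE matrix. -/
structure IsGOE {Ω : Type} [MeasureSpace Ω] (N : ℕ) (W : Fin N → Fin N → Ω → ℝ) : Prop where
  symm : ∀ i j, W i j = W j i
  meas : ∀ i j, Measurable (W i j)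
  indep : iIndepFun
    (fun p : {p : Fin N × Fin N // p.1 ≤ p.2} => W p.1.1 p.1.2) ℙ
  law : ∀ i j, Measure.map (W i j) ℙ = gaussianReal 0 (if i = j then 2 / N else 1 / N)

/-- The parameter `t = N E[H₁₁² 1_{|H₁₁| < N^{-ν}}] / P[|H₁₁| < N^{-ρ}]` from (3.2). -/
def tParam (α ν ρ : ℝ) {Ω : Type} [MeasureSpace Ω] (Z J : Ω → ℝ) (N : ℕ) : ℝ :=
  (N : ℝ) *
      (∫ ω in {ω | |(N : ℝ) ^ (-α⁻¹) * (Z ω + J ω)| < (N : ℝ) ^ (-ν)},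
        ((N : ℝ) ^ (-α⁻¹) * (Z ω + J ω)) ^ 2) /
    (ℙ {ω | |(N : ℝ) ^ (-α⁻¹) * (Z ω + J ω)| < (N : ℝ) ^ (-ρ)}).toReal

/-- The three-level decomposition of Definitions 3.10 and 3.11 of the paper:
`a, b, c` are entries conditioned to be small/medium/large, `ψ, χ` are the Bernoulli
labels, and `W` is an independent GOE matrix. -/
structure Decomp {Ω : Type} [MeasureSpace Ω] (α ν ρ : ℝ) (Z J : Ω → ℝ) (N : ℕ)
    (a b c ψ χ W : Fin N → Fin N → Ω → ℝ) : Prop where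
  symm_a : ∀ i j, a i j = a j i
  symm_b : ∀ i j, b i j = b j i
  symm_c : ∀ i j, c i j = c j i
  symm_ψ : ∀ i j, ψ i j = ψ j i
  symm_χ : ∀ i j, χ i j = χ j i
  symm_W : ∀ i j, W i j = W j i
  meas : ∀ i j, Measurable (a i j) ∧ Measurable (b i j) ∧ Measurable (c i j) ∧
    Measurable (ψ i j) ∧ Measurable (χ i j) ∧ Measurable (W i j)
  indep : iIndepFun
    (fun q : {p : Fin N × Fin N // p.1 ≤ p.2} × Fin 6 =>
      ![a q.1.1.1 q.1.1.2, b q.1.1.1 q.1.1.2, c q.1.1.1 q.1.1.2,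
        ψ q.1.1.1 q.1.1.2, χ q.1.1.1 q.1.1.2, W q.1.1.1 q.1.1.2] q.2) ℙ
  law_a : ∀ i j, Measure.map (a i j) ℙ =
    ProbabilityTheory.cond (Measure.map (fun ω => (N : ℝ) ^ (-α⁻¹) * (Z ω + J ω)) ℙ)
      {x : ℝ | |x| < (N : ℝ) ^ (-ν)}
  law_b : ∀ i j, Measure.map (b i j) ℙ =
    ProbabilityTheory.cond (Measure.map (fun ω => (N : ℝ) ^ (-α⁻¹) * (Z ω + J ω)) ℙ)
      {x : ℝ | (N : ℝ) ^ (-ν) ≤ |x| ∧ |x| < (N : ℝ) ^ (-ρ)}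
  law_c : ∀ i j, Measure.map (c i j) ℙ =
    ProbabilityTheory.cond (Measure.map (fun ω => (N : ℝ) ^ (-α⁻¹) * (Z ω + J ω)) ℙ)
      {x : ℝ | (N : ℝ) ^ (-ρ) ≤ |x|}
  val_ψ : ∀ i j ω, ψ i j ω = 0 ∨ ψ i j ω = 1
  val_χ : ∀ i j ω, χ i j ω = 0 ∨ χ i j ω = 1
  law_ψ : ∀ i j, ℙ {ω | ψ i j ω = 1} =
    (Measure.map (fun ω => (N : ℝ) ^ (-α⁻¹) * (Z ω + J ω)) ℙ) {x : ℝ | (N : ℝ) ^ (-ρ) ≤ |x|}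
  law_χ : ∀ i j, ℙ {ω | χ i j ω = 1} =
    (ProbabilityTheory.cond (Measure.map (fun ω => (N : ℝ) ^ (-α⁻¹) * (Z ω + J ω)) ℙ)
        {x : ℝ | |x| < (N : ℝ) ^ (-ρ)})
      {x : ℝ | (N : ℝ) ^ (-ν) ≤ |x|}
  law_W : ∀ i j, Measure.map (W i j) ℙ = gaussianReal 0 (if i = j then 2 / N else 1 / N)

/-- The interpolating matrix `H^γ = γ A + X + (1 - γ²)^{1/2} t^{1/2} W`. -/
def HgammaMat {Ω : Type} [MeasureSpace Ω] (α ν ρ : ℝ) (Z J : Ω → ℝ) (N : ℕ)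
    (a b c ψ χ W : Fin N → Fin N → Ω → ℝ) (γ : ℝ) (ω : Ω) : Matrix (Fin N) (Fin N) ℝ :=
  Matrix.of fun i j =>
    γ * ((1 - ψ i j ω) * (1 - χ i j ω) * a i j ω) +
      ((1 - ψ i j ω) * χ i j ω * b i j ω + ψ i j ω * c i j ω) +
        Real.sqrt (1 - γ ^ 2) * Real.sqrt (tParam α ν ρ Z J N) * W i j ω

/-- The resolvent `G^γ(z)` of the interpolating matrix `H^γ`. -/
def Ggamma {Ω : Type} [MeasureSpace Ω] (α ν ρ : ℝ) (Z J : Ω → ℝ) (N : ℕ)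
    (a b c ψ χ W : Fin N → Fin N → Ω → ℝ) (γ : ℝ) (z : ℂ) (ω : Ω) :
    Matrix (Fin N) (Fin N) ℂ :=
  resolv (HgammaMat α ν ρ Z J N a b c ψ χ W γ ω) z

/-- The partial derivative of `F : ℝ^m → ℝ` in the `j`-th coordinate direction. -/
def pderiv {m : ℕ} (j : Fin m) (F : (Fin m → ℝ) → ℝ) : (Fin m → ℝ) → ℝ :=
  fun x => fderiv ℝ F x (Pi.single j 1)

/-- Iterated coordinate partial derivatives of `F : ℝ^m → ℝ` along a list of directions;
this encodes the multi-index derivatives `F^{(μ)}`. -/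
def multiDeriv {m : ℕ} (l : List (Fin m)) (F : (Fin m → ℝ) → ℝ) : (Fin m → ℝ) → ℝ :=
  l.foldr pderiv F

/-- The spectral domain `D(E₀, r, η₀, γ)` from (3.4). -/
def specD (E₀ r η₀ γ : ℝ) : Set ℂ :=
  {z : ℂ | z.re ∈ Set.Icc (E₀ - r) (E₀ + r) ∧ η₀ ≤ z.im ∧ z.im ≤ γ}

end Levy

/-!
Write `𝔷 = Z + J`, `K = N ^ (1/α - ν)` and `L = N ^ (1/α - ρ)`. Rescaling the truncation sets
gives `t = N ^ (1 - 2/α) · E[𝔷²; |𝔷| < K] / P[|𝔷| < L]`, and the denominator tends to `1` because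
`L → ∞`. The power-law tails of `𝔷` make the truncated second moment comparable to `K ^ (2 - α)`:
from above by the layer-cake formula `E[𝔷²; |𝔷| < K] ≤ ∫₀^K 2s P[|𝔷| ≥ s] ds`, from below by
`(K/M)² P[K/M ≤ |𝔷| < K]` for a large constant `M`.
Finally `N ^ (1 - 2/α) K ^ (2 - α) = N ^ ((α - 2) ν)`.
-/

open Set Topology

lemma le_div_and_div_le_two_mul {x D lo hi : ℝ} (hlo : 0 ≤ lo) (hx_lo : lo ≤ x) (hx_hi : x ≤ hi)
    (hD_half : 1 / 2 ≤ D) (hD_one : D ≤ 1) : lo ≤ x / D ∧ x / D ≤ 2 * hi := by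
  have hD : 0 < D := by linarith
  constructor
  · rw [le_div_iff₀ hD]
    nlinarith
  · rw [div_le_iff₀ hD]
    nlinarith

namespace Levy

section TruncatedSecondMoment

variable {Ω : Type*} [MeasurableSpace Ω] (μ : Measure Ω) {X : Ω → ℝ}

lemma setIntegral_Ioo_mul_rpow_one_sub {α K : ℝ} (hα : α < 2) (hK : 0 < K) (C : ℝ) :
    ∫ t in Ioo 0 K, C * t ^ (1 - α) = C / (2 - α) * K ^ (2 - α) := by
  rw [← integral_Ioc_eq_integral_Ioo, ← intervalIntegral.integral_of_le hK.le,
    intervalIntegral.integral_const_mul, integral_rpow (Or.inl (by linarith)),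
    Real.zero_rpow (by linarith), show 1 - α + 1 = 2 - α by ring]
  ring

lemma lintegral_ofReal_sq_le_of_tail_le {f : Ω → ℝ} (hf : Measurable f) (hf_nonneg : 0 ≤ f)
    {α C K : ℝ} (hα : α < 2) (hC : 0 ≤ C) (hK : 0 < K) (hfK : ∀ ω, f ω < K)
    (htail : ∀ t, 0 < t → μ {ω | t < f ω} ≤ ENNReal.ofReal (C / t ^ α)) :
    ∫⁻ ω, ENNReal.ofReal (f ω ^ 2) ∂μ ≤ ENNReal.ofReal (2 * C / (2 - α) * K ^ (2 - α)) := by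
  have hlayer : ∫⁻ ω, ENNReal.ofReal (f ω ^ 2) ∂μ =
      ∫⁻ t in Ioi 0, μ {ω | t < f ω} * ENNReal.ofReal (2 * t) := by
    rw [← lintegral_comp_eq_lintegral_meas_lt_mul (g := fun t => 2 * t) μ
      (.of_forall hf_nonneg) hf.aemeasurable
      (fun t _ => (continuous_const.mul continuous_id).intervalIntegrable 0 t)
      ((ae_restrict_iff' measurableSet_Ioi).2 (.of_forall fun t (ht : 0 < t) => by linarith))]
    congr 1 with ω
    rw [intervalIntegral.integral_const_mul, integral_id]
    ring_nf
  have hpoint : ∀ t ∈ Ioi (0 : ℝ), μ {ω | t < f ω} * ENNReal.ofReal (2 * t) ≤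
      (Iio K).indicator (fun t => ENNReal.ofReal (2 * C * t ^ (1 - α))) t := by
    intro t (ht : 0 < t)
    by_cases htK : t < K
    · have hC' : 0 ≤ C / t ^ α := by positivity
      rw [indicator_of_mem (mem_Iio.2 htK),
        show 2 * C * t ^ (1 - α) = C / t ^ α * (2 * t) by
          rw [Real.rpow_sub ht, Real.rpow_one]; field_simp, ENNReal.ofReal_mul hC']
      gcongr
      exact htail t ht
    · have hempty : {ω | t < f ω} = ∅ :=
        eq_empty_of_forall_notMem fun ω (hω : t < f ω) => htK (hω.trans (hfK ω))
      simp [hempty]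
  rw [hlayer]
  calc _ ≤ ∫⁻ t in Ioi 0, (Iio K).indicator (fun t => ENNReal.ofReal (2 * C * t ^ (1 - α))) t :=
        setLIntegral_mono' measurableSet_Ioi hpoint
    _ = ∫⁻ t in Ioo 0 K, ENNReal.ofReal (2 * C * t ^ (1 - α)) := by
        rw [lintegral_indicator measurableSet_Iio, Measure.restrict_restrict measurableSet_Iio,
          Iio_inter_Ioi]
    _ = ENNReal.ofReal (2 * C / (2 - α) * K ^ (2 - α)) := by
        rw [← setIntegral_Ioo_mul_rpow_one_sub hα hK, ofReal_integral_eq_lintegral_ofReal]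
        · exact ((intervalIntegral.intervalIntegrable_rpow' (by linarith)).const_mul (2 * C)
            |>.1).mono_set Ioo_subset_Ioc_self
        · exact (ae_restrict_iff' measurableSet_Ioo).2 (.of_forall fun t ht =>
            mul_nonneg (by positivity) (Real.rpow_nonneg ht.1.le _))

lemma setIntegral_sq_abs_lt_le (hX : Measurable X) {α C K : ℝ} (hα : α < 2) (hC : 0 ≤ C)
    (hK : 0 < K) (htail : ∀ t, 0 < t → μ {ω | t ≤ |X ω|} ≤ ENNReal.ofReal (C / t ^ α)) :
    ∫ ω in {ω | |X ω| < K}, X ω ^ 2 ∂μ ≤ 2 * C / (2 - α) * K ^ (2 - α) := by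
  set S := {ω | |X ω| < K}
  have hS : MeasurableSet S := measurableSet_lt hX.abs measurable_const
  set f := S.indicator fun ω => |X ω|
  have hf : Measurable f := hX.abs.indicator hS
  have hf_le : ∀ ω, f ω ≤ |X ω| := indicator_le_self' fun _ _ => abs_nonneg _
  have hsq : ∫ ω in S, X ω ^ 2 ∂μ = (∫⁻ ω, ENNReal.ofReal (f ω ^ 2) ∂μ).toReal := by
    rw [← integral_indicator hS, ← integral_eq_lintegral_of_nonneg_ae
      (.of_forall fun ω => sq_nonneg _) (hf.pow_const 2).aestronglyMeasurable]
    congr 1 with ω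
    by_cases hω : ω ∈ S <;> simp [f, hω]
  have hfK : ∀ ω, f ω < K := fun ω => by
    by_cases hω : ω ∈ S
    · simp only [f, indicator_of_mem hω]
      exact hω
    · simpa only [f, indicator_of_notMem hω] using hK
  rw [hsq]
  refine ENNReal.toReal_le_of_le_ofReal (by have := Real.rpow_nonneg hK.le (2 - α); positivity)
    (lintegral_ofReal_sq_le_of_tail_le μ hf (indicator_nonneg fun _ _ => abs_nonneg _) hα hC hK
      hfK fun t ht => (measure_mono fun ω (hω : t < f ω) => ?_).trans (htail t ht))
  exact hω.le.trans (hf_le ω)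

lemma sq_mul_measureReal_le_setIntegral_sq [IsFiniteMeasure μ] (hX : Measurable X) {k K : ℝ}
    (hk : 0 ≤ k) :
    k ^ 2 * μ.real {ω | k ≤ |X ω| ∧ |X ω| < K} ≤ ∫ ω in {ω | |X ω| < K}, X ω ^ 2 ∂μ := by
  have hS : MeasurableSet {ω | |X ω| < K} := measurableSet_lt hX.abs measurable_const
  have hA : MeasurableSet {ω | k ≤ |X ω| ∧ |X ω| < K} :=
    (measurableSet_le measurable_const hX.abs).inter hS
  have hint : IntegrableOn (fun ω => X ω ^ 2) {ω | |X ω| < K} μ := by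
    refine Measure.integrableOn_of_bounded (M := K ^ 2) (measure_ne_top μ _)
      (hX.pow_const 2).aestronglyMeasurable ((ae_restrict_iff' hS).2 (.of_forall ?_))
    intro ω (hω : |X ω| < K)
    rw [Real.norm_eq_abs, abs_pow]
    exact pow_le_pow_left₀ (abs_nonneg _) hω.le 2
  calc k ^ 2 * μ.real {ω | k ≤ |X ω| ∧ |X ω| < K}
      ≤ ∫ ω in {ω | k ≤ |X ω| ∧ |X ω| < K}, X ω ^ 2 ∂μ := by
        refine setIntegral_ge_of_const_le_real hA (measure_ne_top μ _) (fun ω hω => ?_)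
          (hint.mono_set fun ω hω => hω.2)
        rw [← sq_abs (X ω)]
        exact pow_le_pow_left₀ hk hω.1 2
    _ ≤ ∫ ω in {ω | |X ω| < K}, X ω ^ 2 ∂μ :=
        setIntegral_mono_set hint (.of_forall fun ω => sq_nonneg _)
          (Eventually.of_forall fun ω hω => hω.2)

lemma eventually_le_setIntegral_sq_abs_lt [IsFiniteMeasure μ] (hX : Measurable X)
    {α c₁ c₂ : ℝ} (hα : 0 < α) (hc₁ : 0 < c₁) (hc₂ : 0 ≤ c₂)
    (hlow : ∀ t, 1 ≤ t → ENNReal.ofReal (c₁ / t ^ α) ≤ μ {ω | t ≤ |X ω|})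
    (hup : ∀ t, 0 < t → μ {ω | t ≤ |X ω|} ≤ ENNReal.ofReal (c₂ / t ^ α)) :
    ∃ c > 0, ∀ᶠ K in atTop, c * K ^ (2 - α) ≤ ∫ ω in {ω | |X ω| < K}, X ω ^ 2 ∂μ := by
  -- `M` is chosen so that `c₁ M ^ α - c₂ = c₁`: the shell `K / M ≤ |X| < K` then has mass
  -- at least `c₁ / K ^ α`.
  set M := ((c₁ + c₂) / c₁) ^ α⁻¹
  have hM : 1 ≤ M := Real.one_le_rpow ((one_le_div hc₁).2 (by linarith)) (by positivity)
  have hMα : M ^ α = (c₁ + c₂) / c₁ := Real.rpow_inv_rpow (by positivity) hα.ne'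
  refine ⟨c₁ / M ^ 2, by positivity, eventually_atTop.2 ⟨M, fun K hK => ?_⟩⟩
  have hK0 : 0 < K := by linarith
  set k := K / M
  have hk : 1 ≤ k := (one_le_div (by linarith)).2 hK
  have hshell : ENNReal.ofReal (c₁ / K ^ α) ≤ μ {ω | k ≤ |X ω| ∧ |X ω| < K} := by
    have hdiff : c₁ / k ^ α - c₂ / K ^ α = c₁ / K ^ α := by
      rw [Real.div_rpow hK0.le (by positivity), hMα]
      field_simp
      ring
    have hset : {ω | k ≤ |X ω| ∧ |X ω| < K} = {ω | k ≤ |X ω|} \ {ω | K ≤ |X ω|} := by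
      ext ω
      simp [not_le]
    rw [← hdiff, hset, ENNReal.ofReal_sub _ (by positivity)]
    exact (tsub_le_tsub (hlow k hk) (hup K hK0)).trans le_measure_sdiff
  have hshell_real : c₁ / K ^ α ≤ μ.real {ω | k ≤ |X ω| ∧ |X ω| < K} :=
    (ENNReal.ofReal_le_iff_le_toReal (measure_ne_top μ _)).1 hshell
  calc c₁ / M ^ 2 * K ^ (2 - α) = k ^ 2 * (c₁ / K ^ α) := by
        rw [Real.rpow_sub hK0, Real.rpow_two, div_pow]
        field_simp
    _ ≤ k ^ 2 * μ.real {ω | k ≤ |X ω| ∧ |X ω| < K} := by gcongr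
    _ ≤ ∫ ω in {ω | |X ω| < K}, X ω ^ 2 ∂μ :=
        sq_mul_measureReal_le_setIntegral_sq μ hX (by positivity)

end TruncatedSecondMoment

lemma tendsto_measure_abs_lt_atTop {Ω : Type*} [MeasurableSpace Ω] (μ : Measure Ω) (X : Ω → ℝ) :
    Tendsto (fun L : ℝ => μ {ω | |X ω| < L}) atTop (𝓝 (μ univ)) := by
  have hunion : (⋃ L : ℝ, {ω | |X ω| < L}) = univ :=
    eq_univ_of_forall fun ω => mem_iUnion.2 ⟨|X ω| + 1, by simp⟩
  rw [← hunion]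
  exact tendsto_measure_iUnion_atTop fun L L' hLL' ω (hω : |X ω| < L) => hω.trans_le hLL'

namespace DeformedStable

variable {Ω : Type} [MeasureSpace Ω] {α σ C₁ C₂ : ℝ} {Z J : Ω → ℝ}

lemma tail_upper_rpow (hZJ : DeformedStable α σ C₁ C₂ Z J) (hα : 0 ≤ α) (hC₂ : 0 ≤ C₂)
    (t : ℝ) (ht : 0 < t) : ℙ {ω | t ≤ |Z ω + J ω|} ≤ ENNReal.ofReal (C₂ / t ^ α) := by
  refine (hZJ.tail_upper t ht.le).trans (ENNReal.ofReal_le_ofReal ?_)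
  gcongr
  linarith

lemma tail_lower_rpow (hZJ : DeformedStable α σ C₁ C₂ Z J) (hα : 0 ≤ α) (hC₁ : 0 ≤ C₁)
    (t : ℝ) (ht : 1 ≤ t) :
    ENNReal.ofReal (C₁ / 2 ^ α / t ^ α) ≤ ℙ {ω | t ≤ |Z ω + J ω|} := by
  refine (ENNReal.ofReal_le_ofReal ?_).trans (hZJ.tail_lower t (by linarith))
  rw [div_div, ← Real.mul_rpow zero_le_two (by linarith)]
  gcongr
  linarith

end DeformedStable

lemma abs_rpow_neg_mul_lt_rpow_neg_iff {N a b x : ℝ} (hN : 0 < N) :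
    |N ^ (-a) * x| < N ^ (-b) ↔ |x| < N ^ (a - b) := by
  have hNa : 0 < N ^ (-a) := Real.rpow_pos_of_pos hN _
  rw [abs_mul, abs_of_pos hNa, ← lt_div_iff₀' hNa, ← Real.rpow_sub hN, neg_sub_neg]

lemma tParam_eq {α ν ρ : ℝ} {Ω : Type} [MeasureSpace Ω] (Z J : Ω → ℝ) {N : ℕ} (hN : 0 < N) :
    tParam α ν ρ Z J N = (N : ℝ) ^ (1 - 2 * α⁻¹) *
      (∫ ω in {ω | |Z ω + J ω| < (N : ℝ) ^ (α⁻¹ - ν)}, (Z ω + J ω) ^ 2) /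
      (ℙ {ω | |Z ω + J ω| < (N : ℝ) ^ (α⁻¹ - ρ)}).toReal := by
  have hN' : (0 : ℝ) < N := by exact_mod_cast hN
  simp only [tParam, abs_rpow_neg_mul_lt_rpow_neg_iff hN', mul_pow, integral_const_mul,
    ← mul_assoc]
  congr 3
  rw [← Real.rpow_natCast, ← Real.rpow_mul hN'.le]
  nth_rw 1 [← Real.rpow_one (N : ℝ)]
  rw [← Real.rpow_add hN']
  congr 1
  push_cast
  ring

lemma rpow_mul_rpow_rpow_eq {N α ν : ℝ} (hN : 0 < N) (hα : α ≠ 0) :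
    N ^ (1 - 2 * α⁻¹) * (N ^ (α⁻¹ - ν)) ^ (2 - α) = N ^ ((α - 2) * ν) := by
  rw [← Real.rpow_mul hN.le, ← Real.rpow_add hN]
  congr 1
  field_simp
  ring

end Levy

/-- Lemma 3.8 of the paper: the Gaussian variance parameter `t` satisfies
`t ≍ N^{(α-2)ν}`. -/
theorem statement_8
    (α b ν ρ : ℝ) (hpc : Levy.ParamConds α b ν ρ)
    {Ω : Type} [MeasureSpace Ω] [IsProbabilityMeasure (ℙ : Measure Ω)]
    (Z J : Ω → ℝ) (C₁ C₂ : ℝ) (hC₁ : 0 < C₁) (hC₂ : 0 < C₂)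
    (hZJ : Levy.DeformedStable α (Levy.stdSigma α) C₁ C₂ Z J) :
    ∃ c C : ℝ, 0 < c ∧ 0 < C ∧ ∃ N₀ : ℕ, ∀ N : ℕ, N₀ ≤ N →
      c * (N : ℝ) ^ ((α - 2) * ν) ≤ Levy.tParam α ν ρ Z J N ∧
      Levy.tParam α ν ρ Z J N ≤ C * (N : ℝ) ^ ((α - 2) * ν) := by
  obtain ⟨hα0, hα2, hb, hνdef, -, -, hρν, -, -, -, -⟩ := hpc
  have hX : Measurable fun ω => Z ω + J ω := hZJ.measZ.add hZJ.measJ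
  obtain ⟨c, hc, hI_low⟩ := Levy.eventually_le_setIntegral_sq_abs_lt ℙ hX hα0 (by positivity)
    hC₂.le (hZJ.tail_lower_rpow hα0.le hC₁.le) (hZJ.tail_upper_rpow hα0.le hC₂.le)
  have hK : Tendsto (fun N : ℕ => (N : ℝ) ^ (α⁻¹ - ν)) atTop atTop :=
    (tendsto_rpow_atTop (by linarith)).comp tendsto_natCast_atTop_atTop
  have hL : Tendsto (fun N : ℕ => (N : ℝ) ^ (α⁻¹ - ρ)) atTop atTop :=
    (tendsto_rpow_atTop (by linarith)).comp tendsto_natCast_atTop_atTop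
  have hD : ∀ᶠ N : ℕ in atTop,
      1 / 2 < (ℙ : Measure Ω).real {ω | |Z ω + J ω| < (N : ℝ) ^ (α⁻¹ - ρ)} :=
    ((ENNReal.tendsto_toReal (measure_ne_top _ _)).comp
      ((Levy.tendsto_measure_abs_lt_atTop ℙ _).comp hL)).eventually_const_lt (by simp; norm_num)
  obtain ⟨N₀, hN₀⟩ :=
    eventually_atTop.1 ((hK.eventually hI_low).and (hD.and (eventually_gt_atTop 0)))
  refine ⟨c, 2 * (2 * C₂ / (2 - α)), hc, by have := sub_pos.2 hα2; positivity, N₀,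
    fun N hN => ?_⟩
  obtain ⟨hI_low, hD_half, hN⟩ := hN₀ N hN
  have hN' : (0 : ℝ) < N := by exact_mod_cast hN
  have hI_up := Levy.setIntegral_sq_abs_lt_le ℙ hX (K := (N : ℝ) ^ (α⁻¹ - ν)) hα2 hC₂.le
    (Real.rpow_pos_of_pos hN' _) (hZJ.tail_upper_rpow hα0.le hC₂.le)
  have ha := Real.rpow_pos_of_pos hN' (1 - 2 * α⁻¹)
  rw [Levy.tParam_eq Z J hN, ← Levy.rpow_mul_rpow_rpow_eq hN' hα0.ne', mul_assoc 2]
  refine le_div_and_div_le_two_mul (by positivity) ?_ ?_ hD_half.le measureReal_le_one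
  · rw [mul_left_comm]
    exact mul_le_mul_of_nonneg_left hI_low ha.le
  · rw [mul_left_comm]
    exact mul_le_mul_of_nonneg_left hI_up ha.le
end
end

section
/- Assume the parameter conditions, let H₁₁ be a random variable with the law of N^{−1/α}𝔷, and let p > α. Then there exists a constant C = C(α, ν, ρ, p, C₁, C₂) > 0 such that for all sufficiently large N: E[|H₁₁|^p · 1_{|H₁₁| < N^{−ν}}] / P[|H₁₁| < N^{−ν}] ≤ C·N^{ν(α−p)−1} and E[|H₁₁|^p · 1_{N^{−ν} ≤ |H₁₁| < N^{−ρ}}] / P[|H₁₁| < N^{−ρ}] ≤ C·N^{ρ(α−p)−1}. (These are the paper's conditional moment bounds E_Ψ[|A_ij|^p | χ_ij] ≤ C·N^{ν(α−p)−1} and E_Ψ[|B_ij|^p] ≤ C·N^{ρ(α−p)−1} for the three-level decomposition.) -/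
open MeasureTheory ProbabilityTheory Matrix Filter
open scoped ENNReal NNReal

noncomputable section

/-!
The rescaled entry `X = |N^{-1/α} 𝔷|` has tail `ℙ[X ≥ t] ≤ C₂ N⁻¹ t^{-α}`. For `p > α` the layer
cake formula bounds the truncated moment `𝔼[X^p; X < T]` by
`∫₀^T p t^{p-1} C₂ N⁻¹ t^{-α} dt = p C₂ N⁻¹ T^{p-α} / (p - α)`. For `T = N^{-τ}` with `τ < 1/α`
(here `τ = ν` or `ρ`) the same tail bound gives `ℙ[X ≥ T] ≤ C₂ N^{τα-1} ≤ 1/2` for large `N`, so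
conditioning on `X < T` at most doubles the bound, which yields `C = 2pC₂/(p - α)`.
-/

section TailMoments

open Set

lemma lintegral_Ioc_rpow {r T : ℝ} (hr : -1 < r) (hT : 0 ≤ T) :
    ∫⁻ t in Ioc 0 T, ENNReal.ofReal (t ^ r) = ENNReal.ofReal (T ^ (r + 1) / (r + 1)) := by
  have hint : IntegrableOn (fun t : ℝ => t ^ r) (Ioc 0 T) := by
    rw [← intervalIntegrable_iff_integrableOn_Ioc_of_le hT]
    exact intervalIntegral.intervalIntegrable_rpow' hr
  rw [← ofReal_integral_eq_lintegral_ofReal hint, ← intervalIntegral.integral_of_le hT,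
    integral_rpow (Or.inl hr), Real.zero_rpow (by linarith), sub_zero]
  filter_upwards [self_mem_ae_restrict measurableSet_Ioc] with t ht
  exact Real.rpow_nonneg ht.1.le r

variable {Ω : Type*} [MeasurableSpace Ω] {μ : Measure Ω} {X : Ω → ℝ} {K α p T : ℝ}

lemma setLIntegral_rpow_le_of_tail (hX : Measurable X) (hX0 : ∀ ω, 0 ≤ X ω) (hK : 0 ≤ K)
    (hp : 0 < p) (hαp : α < p) (hT : 0 ≤ T)
    (htail : ∀ t, 0 < t → μ {ω | t ≤ X ω} ≤ ENNReal.ofReal (K * t ^ (-α)))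
    {S : Set Ω} (hS : S ⊆ {ω | X ω < T}) :
    ∫⁻ ω in S, ENNReal.ofReal (X ω ^ p) ∂μ ≤ ENNReal.ofReal (p * K * T ^ (p - α) / (p - α)) := by
  have hintegrand : ∀ t, 0 < t → μ.restrict S {ω | t ≤ X ω} * ENNReal.ofReal (t ^ (p - 1)) ≤
      (Iic T).indicator (fun t => ENNReal.ofReal K * ENNReal.ofReal (t ^ (p - 1 - α))) t := by
    intro t ht
    by_cases htT : t ≤ T
    · rw [indicator_of_mem (mem_Iic.2 htT)]
      calc μ.restrict S {ω | t ≤ X ω} * ENNReal.ofReal (t ^ (p - 1))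
          ≤ ENNReal.ofReal (K * t ^ (-α)) * ENNReal.ofReal (t ^ (p - 1)) := by
            gcongr
            exact (Measure.restrict_apply_le _ _).trans (htail t ht)
        _ = ENNReal.ofReal K * ENNReal.ofReal (t ^ (p - 1 - α)) := by
            rw [← ENNReal.ofReal_mul (by positivity), ← ENNReal.ofReal_mul hK, mul_assoc,
              ← Real.rpow_add ht, show -α + (p - 1) = p - 1 - α by ring]
    · have hempty : {ω | t ≤ X ω} ∩ S = ∅ :=
        eq_empty_of_forall_notMem fun ω hω =>
          (hω.1.trans_lt (hS hω.2)).not_ge (not_le.1 htT).le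
      rw [Measure.restrict_apply (measurableSet_le measurable_const hX), hempty]
      simp
  calc ∫⁻ ω in S, ENNReal.ofReal (X ω ^ p) ∂μ
      = ENNReal.ofReal p * ∫⁻ t in Ioi 0, μ.restrict S {ω | t ≤ X ω} *
          ENNReal.ofReal (t ^ (p - 1)) :=
        lintegral_rpow_eq_lintegral_meas_le_mul _ (ae_of_all _ hX0) hX.aemeasurable hp
    _ ≤ ENNReal.ofReal p * ∫⁻ t in Ioi 0,
          (Iic T).indicator (fun t => ENNReal.ofReal K * ENNReal.ofReal (t ^ (p - 1 - α))) t := by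
        gcongr ENNReal.ofReal p * ?_
        exact setLIntegral_mono' measurableSet_Ioi hintegrand
    _ = ENNReal.ofReal p *
          (ENNReal.ofReal K * ∫⁻ t in Ioc 0 T, ENNReal.ofReal (t ^ (p - 1 - α))) := by
        rw [lintegral_indicator measurableSet_Iic, Measure.restrict_restrict measurableSet_Iic,
          Iic_inter_Ioi, lintegral_const_mul _ (by fun_prop)]
    _ = ENNReal.ofReal (p * K * T ^ (p - α) / (p - α)) := by
        rw [lintegral_Ioc_rpow (by linarith) hT, ← ENNReal.ofReal_mul hK,
          ← ENNReal.ofReal_mul hp.le, show p - 1 - α + 1 = p - α by ring, mul_div_assoc,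
          mul_assoc]

lemma setIntegral_rpow_le_of_tail (hX : Measurable X) (hX0 : ∀ ω, 0 ≤ X ω) (hK : 0 ≤ K)
    (hp : 0 < p) (hαp : α < p) (hT : 0 ≤ T)
    (htail : ∀ t, 0 < t → μ {ω | t ≤ X ω} ≤ ENNReal.ofReal (K * t ^ (-α)))
    {S : Set Ω} (hS : S ⊆ {ω | X ω < T}) :
    ∫ ω in S, X ω ^ p ∂μ ≤ p * K * T ^ (p - α) / (p - α) := by
  rw [integral_eq_lintegral_of_nonneg_ae (ae_of_all _ fun ω => Real.rpow_nonneg (hX0 ω) p)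
    (hX.pow_const p).aestronglyMeasurable]
  have hαp' : 0 < p - α := sub_pos.2 hαp
  exact ENNReal.toReal_le_of_le_ofReal (by positivity)
    (setLIntegral_rpow_le_of_tail hX hX0 hK hp hαp hT htail hS)

lemma one_sub_le_measureReal_lt [IsProbabilityMeasure μ] (hX : Measurable X) {ε : ℝ}
    (h : μ.real {ω | T ≤ X ω} ≤ ε) : 1 - ε ≤ μ.real {ω | X ω < T} := by
  have hcompl : {ω | X ω < T} = {ω | T ≤ X ω}ᶜ := by ext ω; simp
  rw [hcompl, measureReal_compl (measurableSet_le measurable_const hX), probReal_univ]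
  linarith

lemma setIntegral_rpow_div_le_of_tail [IsProbabilityMeasure μ] (hX : Measurable X)
    (hX0 : ∀ ω, 0 ≤ X ω) (hK : 0 ≤ K) (hp : 0 < p) (hαp : α < p) (hT : 0 < T)
    (htail : ∀ t, 0 < t → μ {ω | t ≤ X ω} ≤ ENNReal.ofReal (K * t ^ (-α)))
    (hsmall : K * T ^ (-α) ≤ 1 / 2) {S : Set Ω} (hS : S ⊆ {ω | X ω < T}) :
    (∫ ω in S, X ω ^ p ∂μ) / μ.real {ω | X ω < T} ≤ 2 * (p * K * T ^ (p - α) / (p - α)) := by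
  have hhalf : 1 / 2 ≤ μ.real {ω | X ω < T} := by
    refine le_trans ?_ (one_sub_le_measureReal_lt hX
      (ENNReal.toReal_le_of_le_ofReal (by positivity) (htail T hT)))
    linarith
  have hnum : 0 ≤ ∫ ω in S, X ω ^ p ∂μ :=
    integral_nonneg fun ω => Real.rpow_nonneg (hX0 ω) p
  calc (∫ ω in S, X ω ^ p ∂μ) / μ.real {ω | X ω < T}
      ≤ (∫ ω in S, X ω ^ p ∂μ) / (1 / 2) := div_le_div_of_nonneg_left hnum (by norm_num) hhalf
    _ ≤ 2 * (p * K * T ^ (p - α) / (p - α)) := by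
        rw [div_div_eq_mul_div, div_one, mul_comm]
        gcongr
        exact setIntegral_rpow_le_of_tail hX hX0 hK hp hαp hT.le htail hS

lemma eventually_mul_natCast_rpow_le {c e ε : ℝ} (he : e < 0) (hε : 0 < ε) :
    ∀ᶠ n : ℕ in atTop, c * (n : ℝ) ^ e ≤ ε := by
  have hlim : Tendsto (fun x : ℝ => c * x ^ e) atTop (nhds 0) := by
    simpa using (tendsto_rpow_neg_atTop (neg_pos.2 he)).const_mul c
  exact (hlim.comp tendsto_natCast_atTop_atTop).eventually (ge_mem_nhds hε)

end TailMoments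

namespace Levy.DeformedStable

variable {Ω : Type} [MeasureSpace Ω] {α σ C₁ C₂ : ℝ} {Z J : Ω → ℝ}

lemma measure_le_abs_mul_le (hZJ : DeformedStable α σ C₁ C₂ Z J) (hα : 0 ≤ α) (hC₂ : 0 ≤ C₂)
    {s t : ℝ} (hs : 0 < s) (ht : 0 < t) :
    ℙ {ω | t ≤ |s * (Z ω + J ω)|} ≤ ENNReal.ofReal (C₂ * s ^ α * t ^ (-α)) := by
  have hset : {ω | t ≤ |s * (Z ω + J ω)|} = {ω | t / s ≤ |Z ω + J ω|} := by
    ext ω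
    simp only [Set.mem_ofPred_eq, abs_mul, abs_of_pos hs, div_le_iff₀' hs]
  rw [hset]
  refine (hZJ.tail_upper _ (by positivity)).trans (ENNReal.ofReal_le_ofReal ?_)
  calc C₂ / (t / s + 1) ^ α ≤ C₂ / (t / s) ^ α := by
        gcongr
        linarith
    _ = C₂ * s ^ α * t ^ (-α) := by
        rw [Real.div_rpow ht.le hs.le, Real.rpow_neg ht.le]
        field_simp

lemma setIntegral_rpow_div_le [IsProbabilityMeasure (ℙ : Measure Ω)]
    (hZJ : DeformedStable α σ C₁ C₂ Z J) (hα : 0 < α) (hC₂ : 0 ≤ C₂) {p : ℝ} (hαp : α < p)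
    {N τ : ℝ} (hN : 0 < N) (hsmall : C₂ * N ^ (τ * α - 1) ≤ 1 / 2)
    {S : Set Ω} (hS : S ⊆ {ω | |N ^ (-α⁻¹) * (Z ω + J ω)| < N ^ (-τ)}) :
    (∫ ω in S, |N ^ (-α⁻¹) * (Z ω + J ω)| ^ p) /
        (ℙ {ω | |N ^ (-α⁻¹) * (Z ω + J ω)| < N ^ (-τ)}).toReal ≤
      2 * p * C₂ / (p - α) * N ^ (τ * (α - p) - 1) := by
  have hscale : (N ^ (-α⁻¹)) ^ α = N ^ (-1 : ℝ) := by
    rw [← Real.rpow_mul hN.le, neg_mul, inv_mul_cancel₀ hα.ne']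
  have hpow : ∀ a : ℝ, N ^ (-1 : ℝ) * (N ^ (-τ)) ^ a = N ^ (-τ * a - 1) := fun a => by
    rw [← Real.rpow_mul hN.le, ← Real.rpow_add hN]; ring_nf
  have key := setIntegral_rpow_div_le_of_tail (μ := ℙ)
    (X := fun ω => |N ^ (-α⁻¹) * (Z ω + J ω)|) (K := C₂ * (N ^ (-α⁻¹)) ^ α)
    ((hZJ.measZ.add hZJ.measJ).const_mul _).abs (fun ω => abs_nonneg _) (by positivity)
    (hα.trans hαp) hαp (by positivity)
    (fun t ht => hZJ.measure_le_abs_mul_le hα.le hC₂ (by positivity) ht) ?_ hS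
  · refine key.trans_eq ?_
    rw [hscale, show τ * (α - p) - 1 = -τ * (p - α) - 1 by ring, ← hpow]
    ring
  · rw [hscale, mul_assoc, hpow, show -τ * -α - 1 = τ * α - 1 by ring]
    exact hsmall

end Levy.DeformedStable

theorem statement_10_general
    (α b ν ρ : ℝ) (hpc : Levy.ParamConds α b ν ρ)
    {Ω : Type} [MeasureSpace Ω] [IsProbabilityMeasure (ℙ : Measure Ω)]
    (Z J : Ω → ℝ) (C₁ C₂ : ℝ) (hC₂ : 0 < C₂)
    (hZJ : Levy.DeformedStable α (Levy.stdSigma α) C₁ C₂ Z J)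
    (p : ℝ) (hp : α < p) :
    ∃ C : ℝ, 0 < C ∧ ∃ N₀ : ℕ, ∀ N : ℕ, N₀ ≤ N →
      (∫ ω in {ω | |(N : ℝ) ^ (-α⁻¹) * (Z ω + J ω)| < (N : ℝ) ^ (-ν)},
            |(N : ℝ) ^ (-α⁻¹) * (Z ω + J ω)| ^ p) /
          (ℙ {ω | |(N : ℝ) ^ (-α⁻¹) * (Z ω + J ω)| < (N : ℝ) ^ (-ν)}).toReal ≤
        C * (N : ℝ) ^ (ν * (α - p) - 1) ∧
      (∫ ω in {ω | (N : ℝ) ^ (-ν) ≤ |(N : ℝ) ^ (-α⁻¹) * (Z ω + J ω)| ∧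
              |(N : ℝ) ^ (-α⁻¹) * (Z ω + J ω)| < (N : ℝ) ^ (-ρ)},
            |(N : ℝ) ^ (-α⁻¹) * (Z ω + J ω)| ^ p) /
          (ℙ {ω | |(N : ℝ) ^ (-α⁻¹) * (Z ω + J ω)| < (N : ℝ) ^ (-ρ)}).toReal ≤
        C * (N : ℝ) ^ (ρ * (α - p) - 1) := by
  have hα : 0 < α := hpc.hα0
  have hνα : ν * α - 1 < 0 := by
    rw [hpc.hνdef, sub_mul, inv_mul_cancel₀ hα.ne']
    linarith [mul_pos hpc.hb hα]
  have hρα : ρ * α - 1 < 0 := by nlinarith [hpc.hρν]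
  obtain ⟨N₀, hN₀⟩ := eventually_atTop.1 <| (eventually_ge_atTop 1).and <|
    (eventually_mul_natCast_rpow_le (c := C₂) hνα one_half_pos).and
      (eventually_mul_natCast_rpow_le (c := C₂) hρα one_half_pos)
  have hpα : 0 < p - α := sub_pos.2 hp
  have hp0 : 0 < p := hα.trans hp
  refine ⟨2 * p * C₂ / (p - α), by positivity, N₀, fun N hN => ?_⟩
  obtain ⟨hN1, hνsmall, hρsmall⟩ := hN₀ N hN
  have hNpos : (0 : ℝ) < N := by exact_mod_cast hN1
  exact ⟨hZJ.setIntegral_rpow_div_le hα hC₂.le hp hNpos hνsmall subset_rfl,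
    hZJ.setIntegral_rpow_div_le hα hC₂.le hp hNpos hρsmall fun ω hω => hω.2⟩

/-- Lemma 3.13 of the paper: conditional moment bounds for the small and
medium parts of a Lévy matrix entry `H₁₁ = N^{-1/α}(Z+J)` in the three-level decomposition. -/
theorem statement_10
    (α b ν ρ : ℝ) (hpc : Levy.ParamConds α b ν ρ)
    {Ω : Type} [MeasureSpace Ω] [IsProbabilityMeasure (ℙ : Measure Ω)]
    (Z J : Ω → ℝ) (C₁ C₂ : ℝ) (hC₁ : 0 < C₁) (hC₂ : 0 < C₂)
    (hZJ : Levy.DeformedStable α (Levy.stdSigma α) C₁ C₂ Z J)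
    (p : ℝ) (hp : α < p) :
    ∃ C : ℝ, 0 < C ∧ ∃ N₀ : ℕ, ∀ N : ℕ, N₀ ≤ N →
      (∫ ω in {ω | |(N : ℝ) ^ (-α⁻¹) * (Z ω + J ω)| < (N : ℝ) ^ (-ν)},
            |(N : ℝ) ^ (-α⁻¹) * (Z ω + J ω)| ^ p) /
          (ℙ {ω | |(N : ℝ) ^ (-α⁻¹) * (Z ω + J ω)| < (N : ℝ) ^ (-ν)}).toReal ≤
        C * (N : ℝ) ^ (ν * (α - p) - 1) ∧
      (∫ ω in {ω | (N : ℝ) ^ (-ν) ≤ |(N : ℝ) ^ (-α⁻¹) * (Z ω + J ω)| ∧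
              |(N : ℝ) ^ (-α⁻¹) * (Z ω + J ω)| < (N : ℝ) ^ (-ρ)},
            |(N : ℝ) ^ (-α⁻¹) * (Z ω + J ω)| ^ p) /
          (ℙ {ω | |(N : ℝ) ^ (-α⁻¹) * (Z ω + J ω)| < (N : ℝ) ^ (-ρ)}).toReal ≤
        C * (N : ℝ) ^ (ρ * (α - p) - 1) :=
  statement_10_general α b ν ρ hpc Z J C₁ C₂ hC₂ hZJ p hp
end
end

section
/- Let N be a positive integer, M an N×N real symmetric matrix, z = E + iη ∈ ℍ, and write G = (M − z)^{−1}. For an index i ∈ [1,N], let M^{(i)} denote M with its i-th row and column set to zero, and G^{(i)} = (M^{(i)} − z)^{−1}. Then for any r ∈ [1,2] one has the deterministic estimate N^{−1} Σ_{j=1}^N |G_jj − G^{(i)}_jj|^r ≤ 8/(N·η^r). -/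
/-! For real symmetric `M` and `G = (M - z)⁻¹`, the Ward identity `Im G_ii = η ∑_k |G_ki|²`
gives `|G_ii| ≤ 1/η` and `∑_k |G_ki|² / |G_ii| ≤ 1/η`. Zeroing the `i`-th row and column turns
`M - z` into `P (M - z) P - z E` with `E = e_i e_iᵀ`, `P = 1 - E`, whose inverse is the Schur
complement formula `G - G E G / G_ii - E / z`. Hence `G_jj - G^{(i)}_jj` is `G_ji² / G_ii` for
`j ≠ i`, and the moduli of these terms sum to at most `1/η`, so (as `r ≥ 1`) their `r`-th
powers sum to at most `η^{-r}`; the term `j = i` is `G_ii + 1/z`, of size at most `2/η`,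
contributing at most `2^r η^{-r} ≤ 4 η^{-r}`. -/

open MeasureTheory ProbabilityTheory Matrix Filter
open scoped ENNReal NNReal

noncomputable section

theorem Finset.sum_rpow_le_rpow_of_sum_le {ι : Type*} (s : Finset ι) {x : ι → ℝ} {c r : ℝ}
    (hx : ∀ j ∈ s, 0 ≤ x j) (hs : ∑ j ∈ s, x j ≤ c) (hr : 1 ≤ r) :
    ∑ j ∈ s, x j ^ r ≤ c ^ r := by
  have hc : 0 ≤ c := (Finset.sum_nonneg hx).trans hs
  have hle : ∀ j ∈ s, x j ^ r ≤ c ^ (r - 1) * x j := fun j hj => by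
    have hxj := hx j hj
    have hxc : x j ≤ c := (Finset.single_le_sum hx hj).trans hs
    calc x j ^ r = x j ^ (r - 1) * x j := by
          rw [← Real.rpow_add_one' hxj (by linarith), sub_add_cancel]
      _ ≤ c ^ (r - 1) * x j := by gcongr
  calc ∑ j ∈ s, x j ^ r ≤ c ^ (r - 1) * ∑ j ∈ s, x j := by
        rw [Finset.mul_sum]; exact Finset.sum_le_sum hle
    _ ≤ c ^ (r - 1) * c := by gcongr
    _ = c ^ r := by
        rw [← Real.rpow_add_one' hc (by linarith)]; ring_nf

theorem IsIdempotentElem.compression_add_smul_mul_eq_one {K R : Type*} [Field K] [Ring R]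
    [Algebra K R] {e a g : R} (he : IsIdempotentElem e) (hag : a * g = 1) {γ c : K}
    (hγ : γ ≠ 0) (hc : c ≠ 0) (hege : e * g * e = γ • e) :
    ((1 - e) * a * (1 - e) + c • e) * (g - γ⁻¹ • (g * e * g) + c⁻¹ • e) = 1 := by
  have hpe : (1 - e) * e = 0 := by rw [sub_mul, one_mul, he.eq, sub_self]
  have hXg : (1 - e) * a * (1 - e) * g = (1 - e) - (1 - e) * a * e * g := by
    rw [mul_sub, mul_one, sub_mul, mul_assoc _ a g, hag, mul_one]
  have hXY : (1 - e) * a * (1 - e) * (g - γ⁻¹ • (g * e * g)) = 1 - e := by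
    have hXgeg : (1 - e) * a * (1 - e) * (g * e * g) = -(γ • ((1 - e) * a * e * g)) := by
      calc (1 - e) * a * (1 - e) * (g * e * g) = (1 - e) * a * (1 - e) * g * e * g := by
            simp only [mul_assoc]
        _ = (1 - e) * e * g - (1 - e) * a * (e * g * e) * g := by
            rw [hXg]; simp only [sub_mul, mul_assoc]
        _ = -(γ • ((1 - e) * a * e * g)) := by
            rw [hpe, hege]; simp only [zero_mul, zero_sub, mul_smul_comm, smul_mul_assoc]
    rw [mul_sub, hXg, mul_smul_comm, hXgeg, smul_neg, smul_smul, inv_mul_cancel₀ hγ, one_smul,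
      sub_neg_eq_add, sub_add_cancel]
  have hXe : (1 - e) * a * (1 - e) * e = 0 := by rw [mul_assoc, hpe, mul_zero]
  have heY : e * (g - γ⁻¹ • (g * e * g)) = 0 := by
    rw [mul_sub, mul_smul_comm, ← mul_assoc, ← mul_assoc, hege, smul_mul_assoc, smul_smul,
      inv_mul_cancel₀ hγ, one_smul, sub_self]
  calc ((1 - e) * a * (1 - e) + c • e) * (g - γ⁻¹ • (g * e * g) + c⁻¹ • e)
      = (1 - e) * a * (1 - e) * (g - γ⁻¹ • (g * e * g)) + c⁻¹ • ((1 - e) * a * (1 - e) * e)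
          + c • (e * (g - γ⁻¹ • (g * e * g))) + (c⁻¹ * c) • (e * e) := by
        simp only [add_mul, mul_add, mul_smul_comm, smul_mul_assoc, smul_add, smul_smul]
        abel
    _ = 1 := by rw [hXY, hXe, heY, inv_mul_cancel₀ hc, he.eq]; simp

namespace Matrix

theorem IsSymm.isHermitian_map_ofReal {n : Type*} {M : Matrix n n ℝ} (hM : M.IsSymm) :
    (M.map ((↑) : ℝ → ℂ)).IsHermitian :=
  (isHermitian_iff_isSymm.mpr hM).map _ fun x => (Complex.conj_ofReal x).symm

variable {n : Type*} [Fintype n] [DecidableEq n] {H G : Matrix n n ℂ} {z : ℂ}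

theorem IsHermitian.isUnit_sub_smul_one (hH : H.IsHermitian) (hz : z.im ≠ 0) :
    IsUnit (H - z • 1) := by
  have hzσ : z ∉ spectrum ℂ H := by
    rw [hH.spectrum_eq_image_range]
    rintro ⟨x, -, rfl⟩
    exact hz (Complex.ofReal_im x)
  simpa [Algebra.algebraMap_eq_smul_one] using (spectrum.notMem_iff.mp hzσ).neg

theorem IsHermitian.conjTranspose_sub_eq_smul_conjTranspose_mul (hH : H.IsHermitian)
    (hG : (H - z • 1) * G = 1) : Gᴴ - G = (star z - z) • (Gᴴ * G) := by
  have hGH : Gᴴ * (H - star z • 1) = 1 := by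
    simpa [conjTranspose_sub, hH.eq] using congrArg (·ᴴ) hG
  calc Gᴴ - G = Gᴴ * ((H - z • 1) * G) - Gᴴ * (H - star z • 1) * G := by
        rw [hG, hGH, mul_one, one_mul]
    _ = (star z - z) • (Gᴴ * G) := by
        simp only [mul_sub, sub_mul, Matrix.mul_smul, smul_mul, one_mul, mul_assoc, sub_smul]
        abel

theorem IsHermitian.im_apply_self_of_mul_eq_one (hH : H.IsHermitian)
    (hG : (H - z • 1) * G = 1) (i : n) : (G i i).im = z.im * ∑ k, ‖G k i‖ ^ 2 := by
  have h := congrArg Complex.im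
    (congrFun (congrFun (hH.conjTranspose_sub_eq_smul_conjTranspose_mul hG) i) i)
  simp only [sub_apply, smul_apply, conjTranspose_apply, mul_apply, smul_eq_mul, Complex.star_def,
    Complex.conj_mul', ← Complex.ofReal_pow, ← Complex.ofReal_sum, Complex.sub_im, Complex.conj_im,
    Complex.mul_im, Complex.ofReal_im, Complex.ofReal_re, Complex.sub_re, Complex.conj_re] at h
  linarith

theorem IsHermitian.sum_norm_sq_div_norm_apply_self_le (hH : H.IsHermitian)
    (hG : (H - z • 1) * G = 1) (hz : 0 < z.im) (i : n) :
    (∑ k, ‖G k i‖ ^ 2) / ‖G i i‖ ≤ z.im⁻¹ := by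
  have hS : ∑ k, ‖G k i‖ ^ 2 = (G i i).im / z.im := by
    rw [hH.im_apply_self_of_mul_eq_one hG i, mul_div_cancel_left₀ _ hz.ne']
  calc (∑ k, ‖G k i‖ ^ 2) / ‖G i i‖ = (G i i).im / ‖G i i‖ * z.im⁻¹ := by
        rw [hS]; ring
    _ ≤ 1 * z.im⁻¹ := by
        gcongr
        exact div_le_one_of_le₀ (Complex.im_le_norm _) (norm_nonneg _)
    _ = z.im⁻¹ := one_mul _

theorem IsHermitian.norm_apply_self_le (hH : H.IsHermitian) (hG : (H - z • 1) * G = 1)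
    (hz : 0 < z.im) (i : n) : ‖G i i‖ ≤ z.im⁻¹ := by
  rcases eq_or_ne (G i i) 0 with h | h
  · rw [h, norm_zero]; positivity
  calc ‖G i i‖ = ‖G i i‖ ^ 2 / ‖G i i‖ := by field_simp
    _ ≤ (∑ k, ‖G k i‖ ^ 2) / ‖G i i‖ := by
        gcongr
        exact Finset.single_le_sum (f := fun k => ‖G k i‖ ^ 2) (fun _ _ => by positivity)
          (Finset.mem_univ i)
    _ ≤ z.im⁻¹ := hH.sum_norm_sq_div_norm_apply_self_le hG hz i

theorem IsHermitian.apply_self_ne_zero (hH : H.IsHermitian) (hG : (H - z • 1) * G = 1)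
    (hz : 0 < z.im) (i : n) : G i i ≠ 0 := by
  have hcol : ∃ k, G k i ≠ 0 := by
    by_contra! h
    simpa [mul_apply, h] using congrFun (congrFun hG i) i
  obtain ⟨k, hk⟩ := hcol
  have hS : 0 < ∑ k, ‖G k i‖ ^ 2 :=
    Finset.sum_pos' (fun _ _ => by positivity) ⟨k, Finset.mem_univ k, by positivity⟩
  intro h
  have := hH.im_apply_self_of_mul_eq_one hG i
  rw [h, Complex.zero_im] at this
  nlinarith

end Matrix

namespace Levy

variable {N : ℕ} {M : Matrix (Fin N) (Fin N) ℝ} {z : ℂ}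

theorem sub_smul_one_mul_resolv (hM : M.IsSymm) (hz : z.im ≠ 0) :
    (M.map ((↑) : ℝ → ℂ) - z • 1) * resolv M z = 1 :=
  mul_nonsing_inv _
    ((isUnit_iff_isUnit_det _).mp (hM.isHermitian_map_ofReal.isUnit_sub_smul_one hz))

theorem resolv_isSymm (hM : M.IsSymm) (z : ℂ) : (resolv M z).IsSymm :=
  IsSymm.inv ((hM.map _).sub (isSymm_one.smul z))

theorem minorMat_map_ofReal (M : Matrix (Fin N) (Fin N) ℝ) (i : Fin N) :
    (minorMat M i).map ((↑) : ℝ → ℂ) =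
      (1 - single i i 1) * M.map ((↑) : ℝ → ℂ) * (1 - single i i 1) := by
  ext j k
  by_cases hj : j = i <;> by_cases hk : k = i <;>
    simp [minorMat, hj, hk, sub_mul, mul_sub, eq_comm (a := i)]

theorem resolv_minorMat (hM : M.IsSymm) (hz : 0 < z.im) (i : Fin N) :
    resolv (minorMat M i) z =
      resolv M z - (resolv M z i i)⁻¹ • (resolv M z * single i i 1 * resolv M z) +
        (-z)⁻¹ • single i i 1 := by
  set G := resolv M z
  have hAG : (M.map ((↑) : ℝ → ℂ) - z • 1) * G = 1 := sub_smul_one_mul_resolv hM hz.ne'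
  have he : IsIdempotentElem (single i i (1 : ℂ)) := by simp [IsIdempotentElem]
  have hz0 : -z ≠ 0 := neg_ne_zero.mpr fun h => by simp [h] at hz
  have hcompress : (minorMat M i).map ((↑) : ℝ → ℂ) - z • 1 =
      (1 - single i i 1) * (M.map ((↑) : ℝ → ℂ) - z • 1) * (1 - single i i 1) +
        (-z) • single i i 1 := by
    have hPAP : (1 - single i i 1) * (M.map ((↑) : ℝ → ℂ) - z • 1) * (1 - single i i 1) =
        (1 - single i i 1) * M.map ((↑) : ℝ → ℂ) * (1 - single i i 1) -
          z • (1 - single i i 1) := by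
      rw [mul_sub (1 - single i i 1), sub_mul _ (_ * z • _), Matrix.mul_smul, Matrix.smul_mul,
        mul_one, he.one_sub.eq]
    rw [minorMat_map_ofReal, hPAP, smul_sub, neg_smul]
    abel
  refine inv_eq_right_inv ?_
  rw [hcompress]
  refine he.compression_add_smul_mul_eq_one hAG
    (hM.isHermitian_map_ofReal.apply_self_ne_zero hAG hz i) hz0 ?_
  simp [smul_single]

theorem resolv_sub_resolv_minorMat_apply_self (hM : M.IsSymm) (hz : 0 < z.im) (i j : Fin N) :
    resolv M z j j - resolv (minorMat M i) z j j =
      (resolv M z i i)⁻¹ * (resolv M z j i * resolv M z i j) + if j = i then z⁻¹ else 0 := by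
  have hGEG : (resolv M z * single i i (1 : ℂ) * resolv M z) j j =
      resolv M z j i * resolv M z i j := by
    simp [mul_apply, single_apply, ite_and]
  rw [resolv_minorMat hM hz i, Matrix.add_apply, Matrix.sub_apply, Matrix.smul_apply, hGEG]
  by_cases hj : j = i
  · subst hj
    simp only [smul_eq_mul, inv_neg, Matrix.smul_apply, single_apply_same, mul_one, ↓reduceIte]
    ring
  · simp [hj, Ne.symm hj]

theorem norm_resolv_sub_resolv_minorMat_apply_self_le (hM : M.IsSymm) (hz : 0 < z.im)
    (i : Fin N) : ‖resolv M z i i - resolv (minorMat M i) z i i‖ ≤ 2 * z.im⁻¹ := by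
  have hG := sub_smul_one_mul_resolv hM hz.ne'
  have hg := hM.isHermitian_map_ofReal.apply_self_ne_zero hG hz i
  rw [resolv_sub_resolv_minorMat_apply_self hM hz, if_pos rfl, inv_mul_cancel_left₀ hg]
  calc ‖resolv M z i i + z⁻¹‖ ≤ ‖resolv M z i i‖ + ‖z⁻¹‖ := norm_add_le _ _
    _ ≤ z.im⁻¹ + z.im⁻¹ := by
        gcongr
        · exact hM.isHermitian_map_ofReal.norm_apply_self_le hG hz i
        · rw [norm_inv]; exact inv_anti₀ hz (Complex.im_le_norm z)
    _ = 2 * z.im⁻¹ := by ring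

theorem sum_norm_resolv_sub_resolv_minorMat_apply_self_erase_le (hM : M.IsSymm)
    (hz : 0 < z.im) (i : Fin N) :
    ∑ j ∈ Finset.univ.erase i, ‖resolv M z j j - resolv (minorMat M i) z j j‖ ≤ z.im⁻¹ := by
  have hG := sub_smul_one_mul_resolv hM hz.ne'
  calc ∑ j ∈ Finset.univ.erase i, ‖resolv M z j j - resolv (minorMat M i) z j j‖
      = ∑ j ∈ Finset.univ.erase i, ‖resolv M z j i‖ ^ 2 / ‖resolv M z i i‖ := by
        refine Finset.sum_congr rfl fun j hj => ?_
        rw [resolv_sub_resolv_minorMat_apply_self hM hz, if_neg (Finset.ne_of_mem_erase hj),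
          add_zero, (resolv_isSymm hM z).apply j i, norm_mul, norm_inv, norm_mul]
        ring
    _ ≤ ∑ j, ‖resolv M z j i‖ ^ 2 / ‖resolv M z i i‖ :=
        Finset.sum_le_sum_of_subset_of_nonneg (Finset.erase_subset i _)
          fun _ _ _ => by positivity
    _ ≤ z.im⁻¹ := by
        rw [← Finset.sum_div]
        exact hM.isHermitian_map_ofReal.sum_norm_sq_div_norm_apply_self_le hG hz i

end Levy

theorem statement_12_general
    (N : ℕ) (M : Matrix (Fin N) (Fin N) ℝ) (hM : M.IsSymm)
    (z : ℂ) (hz : 0 < z.im) (i : Fin N) (r : ℝ) (hr : r ∈ Set.Icc (1 : ℝ) 2) :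
    (N : ℝ)⁻¹ * ∑ j : Fin N,
        (‖Levy.resolv M z j j - Levy.resolv (Levy.minorMat M i) z j j‖) ^ r ≤
      8 / ((N : ℝ) * z.im ^ r) := by
  obtain ⟨hr1, hr2⟩ := hr
  set d : Fin N → ℝ := fun j => ‖Levy.resolv M z j j - Levy.resolv (Levy.minorMat M i) z j j‖
  have hη : 0 ≤ z.im⁻¹ ^ r := by positivity
  have hdiag : d i ^ r ≤ 4 * z.im⁻¹ ^ r :=
    calc d i ^ r ≤ (2 * z.im⁻¹) ^ r := by
          gcongr
          exact Levy.norm_resolv_sub_resolv_minorMat_apply_self_le hM hz i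
      _ = 2 ^ r * z.im⁻¹ ^ r := Real.mul_rpow (by norm_num) (by positivity)
      _ ≤ 2 ^ (2 : ℝ) * z.im⁻¹ ^ r := by gcongr; norm_num
      _ = 4 * z.im⁻¹ ^ r := by norm_num
  have hoff : ∑ j ∈ Finset.univ.erase i, d j ^ r ≤ z.im⁻¹ ^ r :=
    Finset.sum_rpow_le_rpow_of_sum_le _ (fun _ _ => norm_nonneg _)
      (Levy.sum_norm_resolv_sub_resolv_minorMat_apply_self_erase_le hM hz i) hr1
  calc (N : ℝ)⁻¹ * ∑ j, d j ^ r
        = (N : ℝ)⁻¹ * (d i ^ r + ∑ j ∈ Finset.univ.erase i, d j ^ r) := by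
        rw [Finset.add_sum_erase _ (fun j => d j ^ r) (Finset.mem_univ i)]
    _ ≤ (N : ℝ)⁻¹ * (8 * z.im⁻¹ ^ r) := by gcongr; linarith
    _ = 8 / ((N : ℝ) * z.im ^ r) := by rw [Real.inv_rpow hz.le]; ring

/-- Corollary 4.7 of the paper: the deterministic rank-one perturbation
estimate `N⁻¹ Σ_j |G_jj - G^{(i)}_jj|^r ≤ 8 / (N η^r)` for `r ∈ [1,2]`. -/
theorem statement_12
    (N : ℕ) (hN : 0 < N) (M : Matrix (Fin N) (Fin N) ℝ) (hM : M.IsSymm)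
    (z : ℂ) (hz : 0 < z.im) (i : Fin N) (r : ℝ) (hr : r ∈ Set.Icc (1 : ℝ) 2) :
    (N : ℝ)⁻¹ * ∑ j : Fin N,
        (‖Levy.resolv M z j j - Levy.resolv (Levy.minorMat M i) z j j‖) ^ r ≤
      8 / ((N : ℝ) * z.im ^ r) :=
  statement_12_general N M hM z hz i r hr
end
end

section
/- Fix α ∈ (0,2). There exists a constant C = C(α) > 0 such that the following holds for every positive integer N and every η > 0. Let y₁, …, y_N be i.i.d. standard Gaussian random variables and let v₁, …, v_N be real numbers with 0 ≤ v_j ≤ 1/η for every j. Then P[ | N^{−1} Σ_{j=1}^N v_j^{α/2} ( |y_j|^α − E[|y_j|^α] ) | > C·(log N)⁴ / (N^{1/2}·η^{α/2}) ] < C·exp(−(log N)²/C). -/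
open MeasureTheory ProbabilityTheory Matrix Filter
open scoped ENNReal NNReal

noncomputable section

/-!
Each summand `X_j = |y_j|^α - E|y_j|^α` is sub-exponential: since `α < 2`, Fernique's theorem
makes `exp (2 |X_j|)` integrable, and `eˣ ≤ 1 + x + x² e^|x|` then gives `E e^{s X_j} ≤ e^{K s²}`
for `|s| ≤ 1`. Multiplying the event by `√N η^{α/2}` turns the weighted mean into
`∑ a_j X_j` with `a_j = (η v_j)^{α/2} / √N`, and `∑ a_j² ≤ 1` because `η v_j ≤ 1`. The Chernoff
bound at parameter `±1` gives `P(t ≤ |∑ a_j X_j|) ≤ 2 e^{K - t}`, and `t = C (log N)⁴` with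
`C = K + 3` beats `C e^{-(log N)²/C}` as soon as `log N ≥ 1`; for `log N ≤ 1` the right-hand
side already exceeds `1`.
-/

open Real

theorem Real.exp_le_one_add_add_sq_mul_exp_abs (x : ℝ) : exp x ≤ 1 + x + x ^ 2 * exp |x| := by
  have hprod : exp x * exp (-x) = 1 := by rw [← exp_add, add_neg_cancel, exp_zero]
  rcases le_total 0 x with hx | hx
  · -- `(1 - x) eˣ ≤ 1`, multiplied by `1 + x`
    rw [abs_of_nonneg hx]
    nlinarith [add_one_le_exp (-x), exp_pos x, mul_nonneg hx (exp_pos x).le]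
  · -- `(1 - x) eˣ ≤ 1 ≤ (1 - x)(1 + x + x²)` since `(1 - x)(1 + x + x²) = 1 - x³`
    rw [abs_of_nonpos hx]
    nlinarith [add_one_le_exp (-x), exp_pos x, exp_pos (-x), one_le_exp (neg_nonneg.2 hx),
      mul_nonneg (sq_nonneg x) (sub_nonneg.2 (one_le_exp (neg_nonneg.2 hx)))]

theorem Real.exp_mul_le_of_abs_le_one {s : ℝ} (hs : |s| ≤ 1) (x : ℝ) :
    exp (s * x) ≤ 1 + s * x + 2 * s ^ 2 * exp (2 * |x|) := by
  have hsq : x ^ 2 ≤ 2 * exp |x| := by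
    have h := pow_div_factorial_le_exp _ (abs_nonneg x) 2
    rwa [Nat.factorial_two, Nat.cast_two, sq_abs, div_le_iff₀ two_pos, mul_comm] at h
  have hexp : exp |s * x| ≤ exp |x| := by
    rw [exp_le_exp, abs_mul]
    exact mul_le_of_le_one_left (abs_nonneg x) hs
  calc exp (s * x) ≤ 1 + s * x + s ^ 2 * (x ^ 2 * exp |s * x|) := by
        simpa only [mul_pow, mul_assoc] using exp_le_one_add_add_sq_mul_exp_abs (s * x)
    _ ≤ 1 + s * x + s ^ 2 * (2 * exp |x| * exp |x|) := by gcongr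
    _ = 1 + s * x + 2 * s ^ 2 * exp (2 * |x|) := by rw [two_mul |x|, exp_add]; ring

theorem Real.rpow_le_mul_sq_add {α ε : ℝ} (hα0 : 0 ≤ α) (hα2 : α < 2) (hε : 0 < ε) :
    ∃ M, ∀ u : ℝ, 0 ≤ u → u ^ α ≤ ε * u ^ 2 + M := by
  -- beyond `R`, `u ^ (α - 2) ≤ R ^ (α - 2) = ε`
  set R := ε ^ (α - 2)⁻¹
  have hR : 0 < R := rpow_pos_of_pos hε _
  refine ⟨R ^ α, fun u hu => ?_⟩
  rcases le_total u R with huR | hRu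
  · nlinarith [rpow_le_rpow hu huR hα0, sq_nonneg u, hε]
  · have hu0 : 0 < u := hR.trans_le hRu
    have hpow : u ^ (α - 2) ≤ ε := by
      calc u ^ (α - 2) ≤ R ^ (α - 2) := rpow_le_rpow_of_nonpos hR hRu (by linarith)
        _ = ε := by rw [← rpow_mul hε.le, inv_mul_cancel₀ (by linarith), rpow_one]
    have hsplit : u ^ α = u ^ (α - 2) * u ^ 2 := by
      rw [← rpow_natCast u 2, ← rpow_add hu0]; norm_num
    rw [hsplit]
    nlinarith [mul_le_mul_of_nonneg_right hpow (sq_nonneg u), rpow_nonneg hR.le α]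

section SubExponential

variable {Ω : Type*} [MeasurableSpace Ω] {μ : Measure Ω} {X : Ω → ℝ}

theorem ProbabilityTheory.integrable_exp_mul_of_integrable_exp_two_mul_abs
    (hX : AEMeasurable X μ) (h : Integrable (fun ω => exp (2 * |X ω|)) μ) {s : ℝ}
    (hs : |s| ≤ 1) : Integrable (fun ω => exp (s * X ω)) μ := by
  refine h.mono' (hX.const_mul s).exp.aestronglyMeasurable (ae_of_all _ fun ω => ?_)
  rw [norm_of_nonneg (exp_pos _).le, exp_le_exp]
  calc s * X ω ≤ |s| * |X ω| := by rw [← abs_mul]; exact le_abs_self _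
    _ ≤ 2 * |X ω| := by nlinarith [abs_nonneg (X ω)]

theorem ProbabilityTheory.mgf_le_exp_mul_sq_of_integral_eq_zero [IsProbabilityMeasure μ]
    (hX : AEMeasurable X μ) (h : Integrable (fun ω => exp (2 * |X ω|)) μ) (hX0 : μ[X] = 0)
    {s : ℝ} (hs : |s| ≤ 1) :
    mgf X μ s ≤ exp ((2 * ∫ ω, exp (2 * |X ω|) ∂μ) * s ^ 2) := by
  have hXint : Integrable X μ := h.mono' hX.aestronglyMeasurable (ae_of_all _ fun ω => by
    rw [norm_eq_abs]
    linarith [add_one_le_exp (2 * |X ω|), abs_nonneg (X ω)])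
  have hlin : Integrable (fun ω => 1 + s * X ω) μ := (integrable_const 1).add (hXint.const_mul s)
  have hbound : Integrable (fun ω => 1 + s * X ω + 2 * s ^ 2 * exp (2 * |X ω|)) μ :=
    hlin.add (h.const_mul _)
  calc mgf X μ s ≤ ∫ ω, 1 + s * X ω + 2 * s ^ 2 * exp (2 * |X ω|) ∂μ :=
        integral_mono (integrable_exp_mul_of_integrable_exp_two_mul_abs hX h hs) hbound
          fun ω => exp_mul_le_of_abs_le_one hs (X ω)
    _ = 1 + (2 * ∫ ω, exp (2 * |X ω|) ∂μ) * s ^ 2 := by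
        rw [integral_add hlin (h.const_mul _), integral_add (integrable_const 1)
          (hXint.const_mul s), integral_const_mul, integral_const_mul, hX0]
        simp only [integral_const, probReal_univ, smul_eq_mul]
        ring
    _ ≤ exp ((2 * ∫ ω, exp (2 * |X ω|) ∂μ) * s ^ 2) := by
        linarith [add_one_le_exp ((2 * ∫ ω, exp (2 * |X ω|) ∂μ) * s ^ 2)]

end SubExponential

theorem ProbabilityTheory.IsGaussian.integrable_exp_mul_norm_rpow {E : Type*}
    [NormedAddCommGroup E] [NormedSpace ℝ E] [MeasurableSpace E] [BorelSpace E]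
    [SecondCountableTopology E] [CompleteSpace E] (μ : Measure E) [IsGaussian μ] {α : ℝ}
    (hα0 : 0 ≤ α) (hα2 : α < 2) (c : ℝ) : Integrable (fun x => exp (c * ‖x‖ ^ α)) μ := by
  obtain ⟨C, hC, hint⟩ := IsGaussian.exists_integrable_exp_sq μ
  obtain ⟨M, hM⟩ := rpow_le_mul_sq_add hα0 hα2 (div_pos hC (by positivity : 0 < |c| + 1))
  refine (hint.const_mul (exp ((|c| + 1) * M))).mono' (by fun_prop) (ae_of_all _ fun x => ?_)
  have hx := hM ‖x‖ (norm_nonneg x)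
  have hpow : 0 ≤ ‖x‖ ^ α := rpow_nonneg (norm_nonneg x) α
  rw [norm_of_nonneg (exp_pos _).le, ← exp_add, exp_le_exp]
  calc c * ‖x‖ ^ α ≤ (|c| + 1) * ‖x‖ ^ α := by nlinarith [le_abs_self c]
    _ ≤ (|c| + 1) * (C / (|c| + 1) * ‖x‖ ^ 2 + M) := by gcongr
    _ = (|c| + 1) * M + C * ‖x‖ ^ 2 := by field_simp; ring

theorem ProbabilityTheory.IsGaussian.exists_mgf_norm_rpow_sub_integral_le {E : Type*}
    [NormedAddCommGroup E] [NormedSpace ℝ E] [MeasurableSpace E] [BorelSpace E]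
    [SecondCountableTopology E] [CompleteSpace E] (μ : Measure E) [IsGaussian μ] {α : ℝ}
    (hα0 : 0 ≤ α) (hα2 : α < 2) :
    ∃ K, 0 ≤ K ∧ ∀ s : ℝ, |s| ≤ 1 →
      Integrable (fun x => exp (s * (‖x‖ ^ α - ∫ y, ‖y‖ ^ α ∂μ))) μ ∧
      mgf (fun x => ‖x‖ ^ α - ∫ y, ‖y‖ ^ α ∂μ) μ s ≤ exp (K * s ^ 2) := by
  set m := ∫ y, ‖y‖ ^ α ∂μ
  have hmeas : AEMeasurable (fun x : E => ‖x‖ ^ α - m) μ := by fun_prop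
  have hpow : Integrable (fun x : E => ‖x‖ ^ α) μ :=
    (IsGaussian.integrable_exp_mul_norm_rpow μ hα0 hα2 1).mono' (by fun_prop)
      (ae_of_all _ fun x => by
        rw [norm_of_nonneg (rpow_nonneg (norm_nonneg x) α), one_mul]
        linarith [add_one_le_exp (‖x‖ ^ α)])
  have hexp : Integrable (fun x : E => exp (2 * |‖x‖ ^ α - m|)) μ :=
    ((IsGaussian.integrable_exp_mul_norm_rpow μ hα0 hα2 2).const_mul (exp (2 * |m|))).mono'
      (by fun_prop) (ae_of_all _ fun x => by
        have hx := rpow_nonneg (norm_nonneg x) α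
        rw [norm_of_nonneg (exp_pos _).le, ← exp_add, exp_le_exp]
        cases abs_cases (‖x‖ ^ α - m) <;> cases abs_cases m <;> linarith)
  have hmean : ∫ x, (‖x‖ ^ α - m) ∂μ = 0 := by
    rw [integral_sub hpow (integrable_const m), integral_const, probReal_univ, one_smul, sub_self]
  refine ⟨2 * ∫ x, exp (2 * |‖x‖ ^ α - m|) ∂μ,
    mul_nonneg zero_le_two (integral_nonneg fun x => (exp_pos _).le), fun s hs => ⟨?_, ?_⟩⟩
  · exact integrable_exp_mul_of_integrable_exp_two_mul_abs hmeas hexp hs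
  · exact mgf_le_exp_mul_sq_of_integral_eq_zero hmeas hexp hmean hs

theorem ProbabilityTheory.integrable_exp_mul_comp_and_mgf_comp_le {Ω : Type*} [MeasurableSpace Ω]
    {μ : Measure Ω} {Y : Ω → ℝ} (hY : Measurable Y) {ν : Measure ℝ} (hν : μ.map Y = ν)
    {f : ℝ → ℝ} (hf : Measurable f) {s c : ℝ}
    (h : Integrable (fun x => exp (s * f x)) ν ∧ mgf f ν s ≤ c) :
    Integrable (fun ω => exp (s * f (Y ω))) μ ∧ mgf (fun ω => f (Y ω)) μ s ≤ c := by
  subst hν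
  have hexp : Measurable fun x => exp (s * f x) := (hf.const_mul s).exp
  refine ⟨(integrable_map_measure hexp.aestronglyMeasurable hY.aemeasurable).1 h.1, ?_⟩
  rw [← Function.comp_def, ← mgf_map hY.aemeasurable hexp.aestronglyMeasurable]
  exact h.2

section WeightedSum

variable {Ω ι : Type*} [MeasurableSpace Ω] {μ : Measure Ω} [IsProbabilityMeasure μ] [Fintype ι]
  {X : ι → Ω → ℝ} {K : ℝ}

theorem ProbabilityTheory.measureReal_le_sum_mul_le (hmeas : ∀ i, Measurable (X i))
    (hindep : iIndepFun X μ)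
    (hX : ∀ i s, |s| ≤ 1 →
      Integrable (fun ω => exp (s * X i ω)) μ ∧ mgf (X i) μ s ≤ exp (K * s ^ 2))
    (hK : 0 ≤ K) {a : ι → ℝ} (ha : ∑ i, a i ^ 2 ≤ 1) (t : ℝ) :
    μ.real {ω | t ≤ ∑ i, a i * X i ω} ≤ exp (K - t) := by
  set Y : ι → Ω → ℝ := fun i ω => a i * X i ω
  have hYindep : iIndepFun Y μ :=
    hindep.comp (fun i x => a i * x) fun i => measurable_const_mul (a i)
  have hYmeas : ∀ i, Measurable (Y i) := fun i => (hmeas i).const_mul (a i)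
  have ha1 : ∀ i, |a i| ≤ 1 := fun i => (sq_le_one_iff_abs_le_one _).1 <|
    (Finset.single_le_sum (fun j _ => sq_nonneg (a j)) (Finset.mem_univ i)).trans ha
  have hsum : ∀ ω, (∑ i, Y i) ω = ∑ i, a i * X i ω := fun ω => Finset.sum_apply ω _ _
  have hint : Integrable (fun ω => exp (1 * (∑ i, Y i) ω)) μ :=
    hYindep.integrable_exp_mul_sum hYmeas fun i _ => by
      simpa only [Y, one_mul] using (hX i (a i) (ha1 i)).1
  calc μ.real {ω | t ≤ ∑ i, a i * X i ω} = μ.real {ω | t ≤ (∑ i, Y i) ω} := by simp only [hsum]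
    _ ≤ exp (-1 * t) * mgf (∑ i, Y i) μ 1 := measure_ge_le_exp_mul_mgf t zero_le_one hint
    _ = exp (-t) * ∏ i, mgf (X i) μ (a i) := by
        rw [hYindep.mgf_sum hYmeas, neg_one_mul]
        simp only [Y, mgf_const_mul, mul_one]
    _ ≤ exp (-t) * ∏ i, exp (K * a i ^ 2) := by
        gcongr with i
        · exact fun i _ => mgf_nonneg
        · exact (hX i (a i) (ha1 i)).2
    _ = exp (K * ∑ i, a i ^ 2 - t) := by
        rw [← exp_sum, ← exp_add, Finset.mul_sum]; ring_nf
    _ ≤ exp (K - t) := by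
        gcongr
        exact mul_le_of_le_one_right hK ha

theorem ProbabilityTheory.measureReal_le_abs_sum_mul_le (hmeas : ∀ i, Measurable (X i))
    (hindep : iIndepFun X μ)
    (hX : ∀ i s, |s| ≤ 1 →
      Integrable (fun ω => exp (s * X i ω)) μ ∧ mgf (X i) μ s ≤ exp (K * s ^ 2))
    (hK : 0 ≤ K) {a : ι → ℝ} (ha : ∑ i, a i ^ 2 ≤ 1) (t : ℝ) :
    μ.real {ω | t ≤ |∑ i, a i * X i ω|} ≤ 2 * exp (K - t) := by
  have ha' : ∑ i, (-a i) ^ 2 ≤ 1 := by simpa only [neg_sq] using ha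
  calc μ.real {ω | t ≤ |∑ i, a i * X i ω|}
      ≤ μ.real ({ω | t ≤ ∑ i, a i * X i ω} ∪ {ω | t ≤ ∑ i, -a i * X i ω}) := by
        refine measureReal_mono fun ω hω => ?_
        simpa only [Set.mem_union, Set.mem_ofPred_eq, neg_mul, Finset.sum_neg_distrib, ← le_abs]
          using hω
    _ ≤ exp (K - t) + exp (K - t) :=
        (measureReal_union_le _ _).trans <| add_le_add
          (measureReal_le_sum_mul_le hmeas hindep hX hK ha t)
          (measureReal_le_sum_mul_le hmeas hindep hX hK ha' t)
    _ = 2 * exp (K - t) := by ring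

end WeightedSum

theorem Real.sum_sq_div_sqrt_card_le_one {ι : Type*} [Fintype ι] {w : ι → ℝ}
    (hw : ∀ i, |w i| ≤ 1) : ∑ i, (w i / √(Fintype.card ι)) ^ 2 ≤ 1 := by
  simp only [div_pow, sq_sqrt (Nat.cast_nonneg _), ← Finset.sum_div]
  refine div_le_one_of_le₀ ?_ (Nat.cast_nonneg _)
  calc ∑ i, w i ^ 2 ≤ ∑ _i : ι, (1 : ℝ) :=
        Finset.sum_le_sum fun i _ => (sq_le_one_iff_abs_le_one _).2 (hw i)
    _ = Fintype.card ι := by simp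

theorem Real.sqrt_mul_rpow_mul_weighted_mean {ι : Type*} [Fintype ι] {α η N : ℝ} (hN : 0 < N)
    (hη : 0 ≤ η) {v : ι → ℝ} (hv : ∀ i, 0 ≤ v i) (x : ι → ℝ) :
    √N * η ^ (α / 2) * (N⁻¹ * ∑ i, v i ^ (α / 2) * x i) =
      ∑ i, (η * v i) ^ (α / 2) / √N * x i := by
  rw [Finset.mul_sum, Finset.mul_sum]
  refine Finset.sum_congr rfl fun i _ => ?_
  have hsqrt0 : 0 < √N := sqrt_pos.2 hN
  rw [mul_rpow hη (hv i)]
  field_simp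
  rw [sq_sqrt hN.le]
  ring

theorem Real.one_lt_mul_exp_neg_sq_div {C L : ℝ} (hC : 2 < C) (hL : |L| ≤ 1) :
    1 < C * exp (-L ^ 2 / C) := by
  have hL2 : L ^ 2 ≤ 1 := (sq_le_one_iff_abs_le_one L).2 hL
  have hexp := add_one_le_exp (-L ^ 2 / C)
  have hC0 : 0 < C := by linarith
  calc 1 < C - L ^ 2 := by linarith
    _ = C * (-L ^ 2 / C + 1) := by field_simp; ring
    _ ≤ C * exp (-L ^ 2 / C) := by gcongr

theorem Real.two_mul_exp_sub_lt_mul_exp {K C L : ℝ} (hK : 0 ≤ K) (hC : K + 2 < C) (hL : 1 ≤ L) :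
    2 * exp (K - C * L ^ 4) < C * exp (-L ^ 2 / C) := by
  have hC0 : 0 < C := by linarith
  have hexponent : K - C * L ^ 4 ≤ -L ^ 2 / C := by
    have hL2 : 1 ≤ L ^ 2 := one_le_pow₀ hL
    have hL4 : L ^ 4 = L ^ 2 * L ^ 2 := by ring
    have hdiv : L ^ 2 / C ≤ L ^ 2 := div_le_self (by positivity) (by linarith)
    rw [neg_div]
    nlinarith [mul_le_mul_of_nonneg_left (one_le_mul_of_one_le_of_one_le hL2 hL2) hK,
      mul_le_mul_of_nonneg_right hC.le (by positivity : (0 : ℝ) ≤ L ^ 4)]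
  calc 2 * exp (K - C * L ^ 4) ≤ 2 * exp (-L ^ 2 / C) := by gcongr
    _ < C * exp (-L ^ 2 / C) := by gcongr; linarith

/-- Lemma 4.6 of the paper: concentration of `N⁻¹ Σ_j v_j^{α/2} |y_j|^α`
around its Gaussian mean, for i.i.d. standard Gaussians `y_j` and deterministic weights
`0 ≤ v_j ≤ 1/η`. -/
theorem statement_13
    (α : ℝ) (hα : α ∈ Set.Ioo (0 : ℝ) 2) :
    ∃ C : ℝ, 0 < C ∧
      ∀ N : ℕ, 0 < N → ∀ η : ℝ, 0 < η →
      ∀ (Ω : Type) [MeasureSpace Ω] [IsProbabilityMeasure (ℙ : Measure Ω)],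
      ∀ y : Fin N → Ω → ℝ,
        (∀ j, Measurable (y j)) →
        iIndepFun y ℙ →
        (∀ j, Measure.map (y j) ℙ = gaussianReal 0 1) →
      ∀ v : Fin N → ℝ, (∀ j, 0 ≤ v j ∧ v j ≤ 1 / η) →
        ℙ {ω | C * (Real.log N) ^ 4 / ((N : ℝ) ^ ((1 : ℝ) / 2) * η ^ (α / 2)) <
            |(N : ℝ)⁻¹ * ∑ j : Fin N, v j ^ (α / 2) *
              (|y j ω| ^ α - ∫ x : ℝ, |x| ^ α ∂(gaussianReal 0 1))|} <
          ENNReal.ofReal (C * Real.exp (-(Real.log N) ^ 2 / C)) := by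
  obtain ⟨hα0, hα2⟩ := hα
  obtain ⟨K, hK, hmgf⟩ :=
    IsGaussian.exists_mgf_norm_rpow_sub_integral_le (gaussianReal 0 1) hα0.le hα2
  simp only [Real.norm_eq_abs] at hmgf
  refine ⟨K + 3, by linarith, fun N hN η hη Ω _ _ y hy hindep hlaw v hv => ?_⟩
  set m := ∫ x : ℝ, |x| ^ α ∂gaussianReal 0 1
  set L := Real.log N
  have hg : Measurable fun x : ℝ => |x| ^ α - m := by fun_prop
  rw [ENNReal.lt_ofReal_iff_toReal_lt (measure_ne_top _ _), ← measureReal_def, ← sqrt_eq_rpow]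
  rcases le_total L 1 with hL | hL
  · exact measureReal_le_one.trans_lt <| one_lt_mul_exp_neg_sq_div (by linarith)
      (abs_le.2 ⟨by linarith [log_natCast_nonneg N], hL⟩)
  have hN0 : (0 : ℝ) < N := Nat.cast_pos.2 hN
  have hscale : 0 < √N * η ^ (α / 2) := mul_pos (sqrt_pos.2 hN0) (rpow_pos_of_pos hη _)
  have hweights : ∑ j, ((η * v j) ^ (α / 2) / √N) ^ 2 ≤ 1 := by
    have hw : ∀ j, |(η * v j) ^ (α / 2)| ≤ 1 := fun j => by
      have hηv : 0 ≤ η * v j := mul_nonneg hη.le (hv j).1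
      rw [abs_of_nonneg (rpow_nonneg hηv _)]
      exact rpow_le_one hηv ((le_div_iff₀' hη).1 (hv j).2) (by linarith)
    simpa only [Fintype.card_fin] using sum_sq_div_sqrt_card_le_one hw
  calc (ℙ : Measure Ω).real {ω | (K + 3) * L ^ 4 / (√N * η ^ (α / 2)) <
          |(N : ℝ)⁻¹ * ∑ j, v j ^ (α / 2) * (|y j ω| ^ α - m)|}
      ≤ (ℙ : Measure Ω).real
          {ω | (K + 3) * L ^ 4 ≤ |∑ j, (η * v j) ^ (α / 2) / √N * (|y j ω| ^ α - m)|} := by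
        refine measureReal_mono fun ω hω => ?_
        rw [Set.mem_ofPred_eq, div_lt_iff₀ hscale] at hω
        rw [Set.mem_ofPred_eq, ← sqrt_mul_rpow_mul_weighted_mean hN0 hη.le (fun j => (hv j).1),
          abs_mul, abs_of_pos hscale]
        exact hω.le.trans_eq (mul_comm _ _)
    _ ≤ 2 * exp (K - (K + 3) * L ^ 4) :=
        measureReal_le_abs_sum_mul_le (fun j => hg.comp (hy j))
          (hindep.comp (fun _ => _) fun _ => hg)
          (fun j s hs => integrable_exp_mul_comp_and_mgf_comp_le (hy j) (hlaw j) hg (hmgf s hs))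
          hK hweights _
    _ < (K + 3) * exp (-L ^ 2 / (K + 3)) := two_mul_exp_sub_lt_mul_exp hK (by linarith) hL
end
end
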